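/- arXiv:2012.04054 — 2 statements merged into one kernel-verified Lean document; each statement's English description precedes it below -/
import Mathlib

section
/- Let v_n be a sequence of locally integrable functions on ℝ^d and N ≥ 1. Then v_n → 0 almost everywhere on ℝ^d if and only if the symmetrized sums (x₁,…,x_N) ↦ Σ_{i=1}^N v_n(x_i) converge to 0 almost everywhere on ℝ^{dN}. -/
open MeasureTheory Filter

lemma qmp_reindex {E : Type*} [MeasurableSpace E] {ι₁ ι₂ : Type*} [Fintype ι₁] [Fintype ι₂]
    (μ : Measure E) [SigmaFinite μ] (σ : ι₂ → ι₁) (hσ : Function.Injective σ) :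
    Measure.QuasiMeasurePreserving (fun (X : ι₁ → E) (j : ι₂) => X (σ j))
      (Measure.pi fun _ => μ) (Measure.pi fun _ => μ) := by
  classical
  set p : ι₁ → Prop := fun i => i ∈ Set.range σ with hp
  letI F : Fintype (Subtype p) := Subtype.fintype p
  have h1 := (measurePreserving_piEquivPiSubtypeProd (fun _ : ι₁ => μ) p).quasiMeasurePreserving
  have h2 : Measure.QuasiMeasurePreserving Prod.fst
      ((Measure.pi fun _ : Subtype p => μ).prod (Measure.pi fun _ : {i // ¬ p i} => μ))
      (Measure.pi fun _ : Subtype p => μ) := Measure.quasiMeasurePreserving_fst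
  set e : ι₂ ≃ Subtype p := Equiv.ofInjective σ hσ with he
  have h3 := (measurePreserving_piCongrLeft (fun _ : ι₂ => μ) e.symm).quasiMeasurePreserving
  have hcomp := (h3.comp h2).comp h1
  have hfun : (fun (X : ι₁ → E) (j : ι₂) => X (σ j)) =
      (⇑(MeasurableEquiv.piCongrLeft (fun _ : ι₂ => E) e.symm)) ∘
        (Prod.fst ∘ ⇑(MeasurableEquiv.piEquivPiSubtypeProd (fun _ : ι₁ => E) p)) := by
    funext X
    have : ∀ j : ι₂, (MeasurableEquiv.piCongrLeft (fun _ : ι₂ => E) e.symm)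
        (fun i : Subtype p => X i) j = X (σ j) := by
      intro j
      have h4 : j = e.symm (e j) := (e.symm_apply_apply j).symm
      rw [MeasurableEquiv.coe_piCongrLeft]
      conv_lhs => rw [h4]
      rw [Equiv.piCongrLeft_apply_apply]
      rfl
    funext j
    exact (this j).symm
  rw [hfun]
  exact hcomp

lemma pi_instance_eq {α E : Type*} {m : MeasurableSpace E} (F1 F2 : Fintype α) (μ : Measure E) :
    @Measure.pi α (fun _ => E) F1 (fun _ => m) (fun _ => μ) =
      @Measure.pi α (fun _ => E) F2 (fun _ => m) (fun _ => μ) := by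
  rw [Subsingleton.elim F1 F2]

lemma ae_eval_of_ae {ι : Type*} [Fintype ι] {E : Type*} [MeasurableSpace E]
    (μ : Measure E) [SigmaFinite μ] (hμ : μ Set.univ ≠ 0) (i₀ : ι) {Q : E → Prop}
    (h : ∀ᵐ X ∂(Measure.pi fun _ : ι => μ), Q (X i₀)) : ∀ᵐ x ∂μ, Q x := by
  classical
  set p : ι → Prop := fun i => i = i₀ with hp
  haveI : Unique (Subtype p) := ⟨⟨⟨i₀, rfl⟩⟩, fun j => Subtype.ext j.2⟩
  have h1 := measurePreserving_piEquivPiSubtypeProd (fun _ : ι => μ) p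
  set e := MeasurableEquiv.piEquivPiSubtypeProd (fun _ : ι => E) p with he
  have h2 := (MeasurePreserving.symm e h1).quasiMeasurePreserving
  have h3 := (h2.ae h).mono fun q hq => show Q (q.1 ⟨i₀, rfl⟩) by
    have hq1 : (e.symm q) i₀ = q.1 ⟨i₀, rfl⟩ := by
      show (Equiv.piEquivPiSubtypeProd p (fun _ : ι => E)).symm ((q.1 : _), q.2) i₀ = _
      simp only [Equiv.piEquivPiSubtypeProd_symm_apply]
      exact dif_pos rfl
    rwa [hq1] at hq
  have h4 := Measure.ae_ae_of_ae_prod h3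
  have h5 := h4.mono fun f hf => show Q (f ⟨i₀, rfl⟩) by
    by_contra hQ
    rw [ae_iff] at hf
    simp only [hQ, not_false_iff, Set.setOf_true] at hf
    rw [Measure.pi_univ] at hf
    exact (Finset.prod_ne_zero_iff.mpr fun _ _ => hμ) hf
  revert h5
  rw [pi_instance_eq _ Unique.fintype μ]
  intro h5
  have h6 := (MeasurePreserving.symm _
    (measurePreserving_funUnique μ (Subtype p))).quasiMeasurePreserving.ae h5
  refine h6.mono fun x hx => ?_
  simpa [MeasurableEquiv.funUnique] using hx

/-- Let `v n ∈ L¹_loc(ℝ^d)` and `N ≥ 1`. Then `v n → 0` a.e. on `ℝ^d` if and only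
if the symmetrized sums `(x₁,…,x_N) ↦ Σᵢ v n (xᵢ)` converge to `0` a.e. on `ℝ^{dN}`. -/
theorem ae_tendsto_iff_ae_tendsto_sum (d N : ℕ) (hd : 0 < d) (hN : 0 < N)
    (v : ℕ → (Fin d → ℝ) → ℝ)
    (hloc : ∀ n, LocallyIntegrable (v n) (volume : Measure (Fin d → ℝ))) :
    (∀ᵐ x : Fin d → ℝ, Tendsto (fun n => v n x) atTop (nhds 0)) ↔
      (∀ᵐ X : Fin N → (Fin d → ℝ),
        Tendsto (fun n => ∑ i : Fin N, v n (X i)) atTop (nhds 0)) := by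
  classical
  have hμuniv : (volume : Measure (Fin d → ℝ)) Set.univ ≠ 0 := by
    rw [volume_pi, Measure.pi_univ]
    refine Finset.prod_ne_zero_iff.mpr fun _ _ => ?_
    simp [Real.volume_univ]
  have hvol : (volume : Measure (Fin N → Fin d → ℝ)) =
      Measure.pi fun _ => (volume : Measure (Fin d → ℝ)) := volume_pi
  have hNn : (N : ℝ) ≠ 0 := Nat.cast_ne_zero.mpr hN.ne'
  constructor
  · intro h
    rw [hvol]
    have key : ∀ i : Fin N, ∀ᵐ X ∂(Measure.pi fun _ : Fin N => (volume : Measure (Fin d → ℝ))),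
        Tendsto (fun n => v n (X i)) atTop (nhds 0) := by
      intro i
      have hq := qmp_reindex (ι₁ := Fin N) (ι₂ := Fin 1) (volume : Measure (Fin d → ℝ))
        (fun _ => i) (fun a b _ => Subsingleton.elim a b)
      have hfu := (measurePreserving_funUnique (volume : Measure (Fin d → ℝ))
        (Fin 1)).quasiMeasurePreserving
      exact (hfu.comp hq).ae h
    filter_upwards [ae_all_iff.mpr key] with X hX
    simpa using tendsto_finset_sum (Finset.univ : Finset (Fin N)) fun i _ => hX i
  · intro h
    rw [hvol] at h
    set i₀ : Fin N := ⟨0, hN⟩ with hi₀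
    have hL := (qmp_reindex (volume : Measure (Fin d → ℝ))
      (Sum.inl : Fin N → Fin N ⊕ Fin N) Sum.inl_injective).ae h
    have hI : ∀ i : Fin N, ∀ᵐ W ∂(Measure.pi fun _ : Fin N ⊕ Fin N =>
        (volume : Measure (Fin d → ℝ))),
        Tendsto (fun n => ∑ j : Fin N,
          v n (W (if j = i then Sum.inr i₀ else Sum.inl j))) atTop (nhds 0) := by
      intro i
      have hinj : Function.Injective
          (fun j : Fin N => if j = i then Sum.inr i₀ else Sum.inl j :
            Fin N → Fin N ⊕ Fin N) := by
        intro a b hab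
        by_cases ha : a = i <;> by_cases hb : b = i
        · rw [ha, hb]
        · simp [ha, hb] at hab
        · simp [ha, hb] at hab
        · simpa [ha, hb] using hab
      exact (qmp_reindex (volume : Measure (Fin d → ℝ)) _ hinj).ae h
    have key : ∀ᵐ W ∂(Measure.pi fun _ : Fin N ⊕ Fin N => (volume : Measure (Fin d → ℝ))),
        Tendsto (fun n => v n (W (Sum.inr i₀))) atTop (nhds 0) := by
      filter_upwards [hL, ae_all_iff.mpr hI] with W hW hWI
      have hdiff : ∀ i : Fin N, Tendsto
          (fun n => v n (W (Sum.inr i₀)) - v n (W (Sum.inl i))) atTop (nhds 0) := by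
        intro i
        have h' := (hWI i).sub hW
        rw [sub_zero] at h'
        refine h'.congr fun n => ?_
        rw [← Finset.sum_sub_distrib, Finset.sum_eq_single i]
        · simp
        · intro b _ hb
          simp [hb]
        · intro hi
          exact absurd (Finset.mem_univ i) hi
      have hsum := tendsto_finset_sum (Finset.univ : Finset (Fin N)) fun i _ => hdiff i
      have h2 := hsum.add hW
      rw [Finset.sum_const_zero, zero_add] at h2
      have h3 : Tendsto (fun n => (N : ℝ) * v n (W (Sum.inr i₀))) atTop (nhds 0) := by
        refine h2.congr fun n => ?_
        rw [Finset.sum_sub_distrib, sub_add_cancel, Finset.sum_const]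
        simp [mul_comm]
      have h4 := h3.const_mul ((N : ℝ)⁻¹)
      rw [mul_zero] at h4
      exact h4.congr fun n => inv_mul_cancel_left₀ hNn _
    exact ae_eval_of_ae (volume : Measure (Fin d → ℝ)) hμuniv (Sum.inr i₀) key
end

section
/- Binding is stable under adding a small positive potential: let H(v) be a self-adjoint Schrödinger-type operator with ground energy E₀(v) < Σ(v) (the bottom of the essential spectrum), with finite-dimensional ground eigenspace. If u ≥ 0 and min over normalized ground states ψ of ∫ u ρ_ψ < Σ(v) − E₀(v), then E₀(v+u) < Σ(v+u). -/
open ContinuousLinearMap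

/-- Binding is stable under adding a small positive potential (abstract form).
`A` is the Hamiltonian `H(v)` with ground energy `E₀ = inf spec A`, `U ≥ 0` is
the (bounded) perturbation `Σᵢ u(xᵢ)` so that `⟨ψ, U ψ⟩ = ∫ u ρ_ψ`, and
`SigA`, `SigAU` are the bottoms of the essential spectra of `A` and `A + U`, which
satisfy `SigA ≤ SigAU` by the min-max principle.  If the ground eigenspace is
finite-dimensional and the minimum of `⟨ψ, U ψ⟩` over normalized ground states
`ψ` is `< SigA − E₀`, then `E₀(A + U) = inf spec (A + U) < SigAU`. -/
theorem binding_stable_of_small_positive_perturbation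
    {H : Type*} [NormedAddCommGroup H] [InnerProductSpace ℂ H] [CompleteSpace H]
    (A U : H →L[ℂ] H) (hAsa : IsSelfAdjoint A) (hUsa : IsSelfAdjoint U)
    (hUpos : ∀ χ : H, 0 ≤ (inner ℂ χ (U χ) : ℂ).re)
    (E₀ SigA SigAU : ℝ)
    (hE₀ : E₀ = sInf (spectrum ℝ A))
    (hmono : SigA ≤ SigAU)
    (hbind : E₀ < SigA)
    (hfin : FiniteDimensional ℂ (Module.End.eigenspace (A : H →ₗ[ℂ] H) (E₀ : ℂ)))
    (ψ : H) (hψmem : ψ ∈ Module.End.eigenspace (A : H →ₗ[ℂ] H) (E₀ : ℂ)) (hψ : ‖ψ‖ = 1)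
    (hψmin : ∀ χ ∈ Module.End.eigenspace (A : H →ₗ[ℂ] H) (E₀ : ℂ), ‖χ‖ = 1 →
      (inner ℂ ψ (U ψ) : ℂ).re ≤ (inner ℂ χ (U χ) : ℂ).re)
    (hsmall : (inner ℂ ψ (U ψ) : ℂ).re < SigA - E₀) :
    sInf (spectrum ℝ (A + U)) < SigAU := by
  by_contra hcon
  push_neg at hcon
  set T : H →L[ℂ] H := A + U with hT
  have hTsa : IsSelfAdjoint T := hAsa.add hUsa
  have hbdd : BddBelow (spectrum ℝ T) := (spectrum.isCompact T).bddBelow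
  have hspec : ∀ x ∈ spectrum ℝ (T - algebraMap ℝ (H →L[ℂ] H) SigAU), 0 ≤ x := by
    intro x hx
    rw [← spectrum.sub_singleton_eq] at hx
    obtain ⟨y, hy, z, hz, rfl⟩ := hx
    simp only [Set.mem_singleton_iff] at hz
    subst hz
    have := csInf_le hbdd hy
    dsimp only
    linarith
  have hpos : (0 : H →L[ℂ] H) ≤ T - algebraMap ℝ (H →L[ℂ] H) SigAU :=
    (StarOrderedRing.nonneg_iff_spectrum_nonneg (R := ℝ) _
      (hTsa.sub (IsSelfAdjoint.algebraMap _ (isSelfAdjoint_iff.mpr rfl)))).mpr hspec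
  rw [nonneg_iff_isPositive] at hpos
  have h0 := hpos.inner_nonneg_left ψ
  have hAψ : A ψ = (E₀ : ℂ) • ψ := by
    simpa using hψmem
  have hψψ : (inner ℂ ψ ψ : ℂ) = 1 := by
    rw [inner_self_eq_norm_sq_to_K, hψ]; norm_num
  have hcalc : (RCLike.re (inner ℂ ((T - algebraMap ℝ (H →L[ℂ] H) SigAU) ψ) ψ : ℂ)) =
      E₀ + (inner ℂ ψ (U ψ) : ℂ).re - SigAU := by
    have halg : (algebraMap ℝ (H →L[ℂ] H) SigAU) ψ = (SigAU : ℂ) • ψ := by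
      simp [Algebra.algebraMap_eq_smul_one, ← smul_assoc]
    rw [sub_apply, hT, add_apply, hAψ, halg]
    rw [inner_sub_left, inner_add_left, inner_smul_left, inner_smul_left, hψψ]
    have : RCLike.re (inner ℂ (U ψ) ψ : ℂ) = (inner ℂ ψ (U ψ) : ℂ).re := inner_re_symm _ _
    simp only [map_sub, map_add]
    rw [this]
    simp [Complex.add_re, Complex.sub_re, Complex.mul_re]
  have h0 := (RCLike.nonneg_iff.mp h0).1
  rw [hcalc] at h0
  linarith
end
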